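/- For all natural numbers n and every positive integer β, the special case α = 1, γ = 1 holds: ∑_{i=0}^n (-1)^i * C((β-1)*(n-i) + 1, i) * (1/(β*(n-i)+1)) * C(β*(n-i)+1, n-i) = δ_{0,n}. -/

import Mathlib

/-!
Write the Fuss–Catalan number `1/(βm+1) C(βm+1, m)` as the value `A_m(1, β)` of Gould's
polynomial `A_k(x, z) = x/(x+kz) C(x+kz, k)`. Reflecting the upper index,
`(-1)^(n-m) C((β-1)m+1, n-m) = C(n-2-βm, n-m)`, so after reversing the order of summation the
sum is `∑ₘ A_m(1, β) C(n-2-mβ, n-m)`. The Rothe–Hagen convolution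
`∑ₖ A_k(x, z) C(y-kz, n-k) = C(x+y, n)` evaluates this to `C(n-1, n) = δ_{0,n}`. For natural `x`
and `z` the convolution follows by induction on `n` and then on `x`, from the Pascal-type
recurrence `A_{k+1}(x+1) = A_{k+1}(x) + A_k(x+z)`.
-/

open Finset Ring

section Gould

variable {R : Type*} [CommRing R] [BinomialRing R]

/-- Gould's polynomial `A_k(x, z)`, i.e. `x/(x+kz) C(x+kz, k)` written without division. -/
noncomputable def gould (z x : R) : ℕ → R
  | 0 => 1
  | k + 1 => choose (x + (k + 1) * z) (k + 1) - z * choose (x + (k + 1) * z - 1) k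

@[simp] theorem gould_zero (z x : R) : gould z x 0 = 1 := rfl

theorem succ_nsmul_choose_succ (r : R) (k : ℕ) :
    (k + 1) • choose r (k + 1) = r * choose (r - 1) k := by
  simpa using choose_smul_choose r (Nat.le_add_left 1 k)

theorem succ_nsmul_gould_succ (z x : R) (k : ℕ) :
    (k + 1) • gould z x (k + 1) = x * choose (x + (k + 1) * z - 1) k := by
  rw [gould, smul_sub, succ_nsmul_choose_succ, nsmul_eq_mul (k + 1) (z * _)]
  push_cast
  ring

theorem gould_zero_left_succ (z : R) (k : ℕ) : gould z 0 (k + 1) = 0 := by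
  have := BinomialRing.toIsAddTorsionFree (R := R)
  apply nsmul_right_injective k.succ_ne_zero
  simpa using succ_nsmul_gould_succ z 0 k

theorem gould_add_one_succ (z x : R) (k : ℕ) :
    gould z (x + 1) (k + 1) = gould z x (k + 1) + gould z (x + z) k := by
  cases k with
  | zero => simp [gould]
  | succ k =>
    set a := x + (k + 2) * z
    simp only [gould]
    push_cast
    rw [show x + 1 + ((k : R) + 1 + 1) * z = a + 1 by ring,
      show x + ((k : R) + 1 + 1) * z = a by ring, show x + z + ((k : R) + 1) * z = a by ring,
      add_sub_cancel_right]
    have pascal := choose_succ_succ (a - 1) k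
    rw [sub_add_cancel] at pascal
    linear_combination choose_succ_succ a (k + 1) - z * pascal

theorem neg_one_pow_mul_choose (r : R) (i : ℕ) :
    (-1) ^ i * choose r i = choose (i - r - 1) i := by
  rw [show (i : R) - r - 1 = -(r + 1 - i) by ring, choose_neg, Units.smul_def, zsmul_eq_mul,
    Int.cast_negOnePow_natCast, sub_add_cancel, add_sub_cancel_right]

theorem sum_gould_mul_choose (z x n : ℕ) (y : R) :
    ∑ k ∈ range (n + 1), gould (z : R) x k * choose (y - k * z) (n - k) = choose (x + y) n := by
  induction n generalizing x y with
  | zero => simp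
  | succ n ih =>
    induction x generalizing y with
    | zero => simp [sum_range_succ', gould_zero_left_succ]
    | succ x ihx =>
      have hrec : ∀ k ∈ range (n + 1),
          gould (z : R) ((x + 1 : ℕ) : R) (k + 1) *
              choose (y - (k + 1 : ℕ) * z) (n + 1 - (k + 1)) =
            gould (z : R) x (k + 1) * choose (y - (k + 1 : ℕ) * z) (n + 1 - (k + 1)) +
              gould (z : R) (x + z : ℕ) k * choose (y - z - k * z) (n - k) := by
        intro k _
        push_cast
        rw [gould_add_one_succ, show y - (k + 1) * z = y - z - k * z by ring]
        ring
      have hx := ihx y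
      rw [sum_range_succ'] at hx ⊢
      simp only [gould_zero] at hx ⊢
      rw [sum_congr rfl hrec, sum_add_distrib, add_right_comm, hx, ih, Nat.cast_succ,
        add_right_comm (x : R), choose_succ_succ, Nat.cast_add, add_add_sub_cancel, add_comm]

theorem natCast_mul_gould_one (z k : ℕ) :
    ((z * k + 1 : ℕ) : R) * gould (z : R) 1 k = (z * k + 1).choose k := by
  cases k with
  | zero => simp
  | succ k =>
    have := BinomialRing.toIsAddTorsionFree (R := R)
    apply nsmul_right_injective k.succ_ne_zero
    change (k + 1) • _ = (k + 1) • _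
    rw [← mul_smul_comm, succ_nsmul_gould_succ, one_mul,
      show (1 : R) + (k + 1) * z - 1 = (z * (k + 1) : ℕ) by push_cast; ring, choose_natCast,
      nsmul_eq_mul]
    exact_mod_cast congrArg (Nat.cast (R := R))
      ((Nat.add_one_mul_choose_eq _ k).trans (mul_comm _ _))

end Gould

theorem gould_one_eq_fussCatalan (β k : ℕ) :
    gould (β : ℚ) 1 k = 1 / (β * k + 1) * (β * k + 1).choose k := by
  rw [← natCast_mul_gould_one]
  push_cast
  field_simp

theorem stmt_3 (n β : ℕ) (hβ : 0 < β) :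
    ∑ i ∈ Finset.range (n + 1),
      (-1 : ℚ) ^ i * (((β - 1) * (n - i) + 1).choose i) *
        ((1 : ℚ) / (β * (n - i) + 1)) * ((β * (n - i) + 1).choose (n - i))
      = if n = 0 then 1 else 0 := by
  calc _ = ∑ k ∈ range (n + 1), gould (β : ℚ) 1 k * choose ((n - 2 : ℚ) - k * β) (n - k) := by
        rw [← sum_range_reflect]
        refine sum_congr rfl fun k hk => ?_
        have hkn : k ≤ n := Nat.lt_succ_iff.mp (mem_range.mp hk)
        have hsign : (-1 : ℚ) ^ (n - k) * (((β - 1) * k + 1).choose (n - k) : ℕ) =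
            choose ((n - 2 : ℚ) - k * β) (n - k) := by
          rw [← choose_natCast, neg_one_pow_mul_choose]
          congr 1
          push_cast [Nat.cast_sub hkn, Nat.cast_sub hβ]
          ring
        rw [Nat.add_sub_cancel, Nat.sub_sub_self hkn, Nat.cast_sub hkn, sub_sub_cancel, mul_assoc,
          hsign, gould_one_eq_fussCatalan, mul_comm]
    _ = choose (1 + (n - 2 : ℚ)) n := by
        simpa using sum_gould_mul_choose (R := ℚ) β 1 n (n - 2)
    _ = if n = 0 then 1 else 0 := by
        cases n with
        | zero => simp
        | succ m =>
          rw [show 1 + ((m + 1 : ℕ) - 2 : ℚ) = (m : ℕ) by push_cast; ring, choose_natCast,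
            Nat.choose_eq_zero_of_lt m.lt_succ_self]
          simp
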